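/- arXiv:1008.2505 — 4 statements merged into one kernel-verified Lean document; each statement's English description precedes it below -/
import Mathlib

section
/- The map δ on sl_{n+1}(ℂ) given by δ(E_{i,j}) = (1/(2n+2)) Σ_{k} (E_{i,k} ⊗ E_{k,j} − E_{k,j} ⊗ E_{i,k}) satisfies the co-Jacobi identity: (1 + ξ + ξ²) ∘ (1 ⊗ δ) ∘ δ = 0, where ξ is the cyclic permutation on the triple tensor product. Hence (sl_{n+1}(ℂ), δ) is a Lie coalgebra. -/
/-!
Write `Δ(E_ij) = ∑_k E_ik ⊗ E_kj` for the comatrix coproduct, so that `δ = c (1 - τ) Δ`.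
Expanding and relabelling the summation indices,
`(1 ⊗ δ) δ (E_ij) = c² (1 - s) (1 - ξ²) A_ij` with `A_ij = ∑_{k,l} E_ik ⊗ E_kl ⊗ E_lj` and
`s = 1 ⊗ τ`; this is where coassociativity of `Δ` enters. On a pure tensor `a ⊗ b ⊗ c`,
`(1 - s)(1 - ξ²)` produces `abc - acb - cab + cba`, whose cyclic sum vanishes because the
`ξ`-orbits of `abc` and of `acb` each occur once with each sign.
-/

open TensorProduct Matrix LieAlgebra.SpecialLinear

abbrev glC (m : ℕ) := Matrix (Fin m) (Fin m) ℂ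

abbrev EM {m : ℕ} (i j : Fin m) : glC m := Matrix.single i j 1

/-- The flip map `τ`. -/
noncomputable abbrev tauMap (m : ℕ) : glC m ⊗[ℂ] glC m →ₗ[ℂ] glC m ⊗[ℂ] glC m :=
  (TensorProduct.comm ℂ (glC m) (glC m)).toLinearMap

/-- The cyclic permutation `ξ : u ⊗ v ⊗ w ↦ v ⊗ w ⊗ u` (right-associated tensors). -/
noncomputable abbrev xiMap (m : ℕ) :
    glC m ⊗[ℂ] (glC m ⊗[ℂ] glC m) →ₗ[ℂ] glC m ⊗[ℂ] (glC m ⊗[ℂ] glC m) :=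
  ((TensorProduct.leftComm ℂ (glC m) (glC m) (glC m)).trans
    (TensorProduct.congr (LinearEquiv.refl ℂ (glC m))
      (TensorProduct.comm ℂ (glC m) (glC m)))).toLinearMap

section CyclicPerm

variable (R M : Type*) [CommRing R] [AddCommGroup M] [Module R M]

noncomputable def cyclicPerm : M ⊗[R] (M ⊗[R] M) →ₗ[R] M ⊗[R] (M ⊗[R] M) :=
  ((TensorProduct.leftComm R M M M).trans
    (TensorProduct.congr (LinearEquiv.refl R M) (TensorProduct.comm R M M))).toLinearMap

noncomputable def cyclicSum : M ⊗[R] (M ⊗[R] M) →ₗ[R] M ⊗[R] (M ⊗[R] M) :=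
  LinearMap.id + cyclicPerm R M + cyclicPerm R M ∘ₗ cyclicPerm R M

variable {R M}

theorem cyclicPerm_tmul (a b c : M) :
    cyclicPerm R M (a ⊗ₜ (b ⊗ₜ c)) = b ⊗ₜ (c ⊗ₜ a) := rfl

theorem cyclicSum_comp_antisymmetrizer_eq_zero :
    cyclicSum R M ∘ₗ
      (LinearMap.id - (TensorProduct.comm R M M).toLinearMap.lTensor M) ∘ₗ
        (LinearMap.id - cyclicPerm R M ∘ₗ cyclicPerm R M) = 0 := by
  refine TensorProduct.ext_threefold' fun a b c => ?_
  simp only [cyclicSum, LinearMap.comp_apply, LinearMap.sub_apply, LinearMap.add_apply,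
    LinearMap.id_apply, map_sub, cyclicPerm_tmul, LinearMap.lTensor_tmul, LinearEquiv.coe_coe,
    TensorProduct.comm_tmul, LinearMap.zero_apply]
  abel

end CyclicPerm

theorem Matrix.linearMap_ext_single {ι R N : Type*} [Fintype ι] [DecidableEq ι] [CommSemiring R]
    [AddCommMonoid N] [Module R N] {f g : Matrix ι ι R →ₗ[R] N}
    (h : ∀ i j, f (single i j 1) = g (single i j 1)) : f = g :=
  (stdBasis R ι ι).ext fun ⟨i, j⟩ => by simpa only [stdBasis_eq_single] using h i j

section Cobracket

variable {ι R : Type*} [Fintype ι] [DecidableEq ι] [CommRing R]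

/-- `δ(E_ij) = c (Δ E_ij - τ Δ E_ij)` for the comatrix coproduct `Δ(E_ij) = ∑_k E_ik ⊗ E_kj`. -/
def IsAntisymmetrizedComatrix (c : R) (δ : Matrix ι ι R →ₗ[R] Matrix ι ι R ⊗[R] Matrix ι ι R) :
    Prop :=
  ∀ i j : ι, δ (single i j 1) =
    c • ∑ k, (single i k 1 ⊗ₜ[R] single k j 1 - single k j 1 ⊗ₜ[R] single i k 1)

variable {c : R} {δ : Matrix ι ι R →ₗ[R] Matrix ι ι R ⊗[R] Matrix ι ι R}

namespace IsAntisymmetrizedComatrix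

theorem comm_apply_add_self (hδ : IsAntisymmetrizedComatrix c δ) (x : Matrix ι ι R) :
    TensorProduct.comm R _ _ (δ x) + δ x = 0 := by
  suffices (TensorProduct.comm R _ _).toLinearMap ∘ₗ δ + δ = 0 from congr($this x)
  refine Matrix.linearMap_ext_single fun i j => ?_
  simp only [LinearMap.add_apply, LinearMap.comp_apply, LinearEquiv.coe_coe, hδ i j, map_smul,
    map_sum, map_sub, TensorProduct.comm_tmul, ← smul_add, ← Finset.sum_add_distrib,
    sub_add_sub_cancel, sub_self, Finset.sum_const_zero, smul_zero, LinearMap.zero_apply]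

theorem lTensor_apply_apply_single (hδ : IsAntisymmetrizedComatrix c δ) (i j : ι) :
    δ.lTensor _ (δ (single i j 1)) =
      (c * c) • ((LinearMap.id - (TensorProduct.comm R _ _).toLinearMap.lTensor _) ∘ₗ
        (LinearMap.id - cyclicPerm R _ ∘ₗ cyclicPerm R _))
        (∑ k, ∑ l, single i k 1 ⊗ₜ[R] (single k l 1 ⊗ₜ[R] single l j (1 : R))) := by
  simp only [hδ _ _, map_smul, map_sum, map_sub, LinearMap.lTensor_tmul, tmul_smul, tmul_sum,
    tmul_sub, LinearMap.comp_apply, LinearMap.sub_apply, LinearMap.id_apply, cyclicPerm_tmul,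
    LinearEquiv.coe_coe, TensorProduct.comm_tmul]
  simp only [← smul_sub, ← Finset.smul_sum, smul_smul, Finset.sum_sub_distrib]
  congr 3 <;> exact Finset.sum_comm

theorem coJacobi (hδ : IsAntisymmetrizedComatrix c δ) (x : Matrix ι ι R) :
    cyclicSum R _ (δ.lTensor _ (δ x)) = 0 := by
  suffices cyclicSum R _ ∘ₗ δ.lTensor _ ∘ₗ δ = 0 from congr($this x)
  refine Matrix.linearMap_ext_single fun i j => ?_
  rw [LinearMap.comp_apply, LinearMap.comp_apply, hδ.lTensor_apply_apply_single, map_smul,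
    ← LinearMap.comp_apply, cyclicSum_comp_antisymmetrizer_eq_zero, LinearMap.zero_apply,
    smul_zero, LinearMap.zero_apply]

end IsAntisymmetrizedComatrix

end Cobracket

theorem id_add_xiMap_add_xiMap_comp_xiMap (m : ℕ) :
    LinearMap.id + xiMap m + xiMap m ∘ₗ xiMap m = cyclicSum ℂ (glC m) := rfl

/-- `δ` satisfies the co-Jacobi identity
`(1 + ξ + ξ²) ∘ (1 ⊗ δ) ∘ δ = 0`; together with antisymmetry this says
`(sl_{n+1}(ℂ), δ)` is a Lie coalgebra. -/
theorem statement1 (n : ℕ)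
    (δ : glC (n + 1) →ₗ[ℂ] glC (n + 1) ⊗[ℂ] glC (n + 1))
    (hδ : ∀ i j : Fin (n + 1),
      δ (EM i j) = (1 / (2 * (n : ℂ) + 2)) •
        ∑ k : Fin (n + 1), (EM i k ⊗ₜ[ℂ] EM k j - EM k j ⊗ₜ[ℂ] EM i k)) :
    (∀ x ∈ sl (Fin (n + 1)) ℂ,
      ((LinearMap.id + xiMap (n + 1) + xiMap (n + 1) ∘ₗ xiMap (n + 1) :
        glC (n + 1) ⊗[ℂ] (glC (n + 1) ⊗[ℂ] glC (n + 1)) →ₗ[ℂ]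
          glC (n + 1) ⊗[ℂ] (glC (n + 1) ⊗[ℂ] glC (n + 1))))
        ((LinearMap.lTensor (glC (n + 1)) δ) (δ x)) = 0) ∧
    (∀ x ∈ sl (Fin (n + 1)) ℂ, tauMap (n + 1) (δ x) + δ x = 0) := by
  have hδ' : IsAntisymmetrizedComatrix (1 / (2 * (n : ℂ) + 2)) δ := hδ
  rw [id_add_xiMap_add_xiMap_comp_xiMap]
  exact ⟨fun x _ => hδ'.coJacobi x, fun x _ => hδ'.comm_apply_add_self x⟩
end

section
/- For the map δ on sl_{n+1}(ℂ) defined by δ(E_{i,j}) = (1/(2n+2)) Σ_{k} (E_{i,k} ⊗ E_{k,j} − E_{k,j} ⊗ E_{i,k}), the composition of the Lie bracket (viewed as a linear map sl_{n+1} ⊗ sl_{n+1} → sl_{n+1}) with δ is the identity map on sl_{n+1}(ℂ). -/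
/-! On matrix units, `∑ₖ E_ik E_kj = (n+1) E_ij` while `∑ₖ E_kj E_ik = δ_ij I = tr(E_ij) I`,
so `m (δ E_ij) = E_ij - tr(E_ij) I / (n+1)`. By linearity `m ∘ δ = id - tr(·) I / (n+1)` on
all of `gl_{n+1}`, which is the identity on traceless matrices. -/

open TensorProduct Matrix LieAlgebra.SpecialLinear

/-- The bracket `[x,y] = xy - yx` as a linear map `gl ⊗ gl →ₗ gl`. -/
noncomputable abbrev brMap (m : ℕ) : glC m ⊗[ℂ] glC m →ₗ[ℂ] glC m :=
  TensorProduct.lift (LinearMap.mul ℂ (glC m) - (LinearMap.mul ℂ (glC m)).flip)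

namespace Matrix

variable {ι α : Type*} [Fintype ι] [DecidableEq ι] [Semiring α]

theorem sum_single_mul_single_eq_card_smul (i j : ι) :
    ∑ k, single i k (1 : α) * single k j 1 = (Fintype.card ι : α) • single i j 1 := by
  simp [single_mul_single_same, smul_single]

theorem sum_single_mul_single_eq_trace_smul_one (i j : ι) :
    ∑ k, single k j (1 : α) * single i k 1 =
      trace (single i j (1 : α)) • (1 : Matrix ι ι α) := by
  by_cases hij : i = j
  · subst hij
    simp [single_mul_single_same, sum_single_one]
  · rw [trace_single_eq_of_ne _ _ _ hij, zero_smul]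
    exact Finset.sum_eq_zero fun k _ => single_mul_single_of_ne (c := 1) k j i (Ne.symm hij) 1

end Matrix

theorem brMap_tmul_sub_tmul (m : ℕ) (a b : glC m) :
    brMap m (a ⊗ₜ b - b ⊗ₜ a) = (2 : ℂ) • (a * b - b * a) := by
  simp only [map_sub, lift.tmul, LinearMap.sub_apply, LinearMap.mul_apply',
    LinearMap.flip_apply]
  module

theorem brMap_sum_tmul_single (m : ℕ) (i j : Fin m) :
    brMap m (∑ k, (EM i k ⊗ₜ[ℂ] EM k j - EM k j ⊗ₜ[ℂ] EM i k)) =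
      (2 : ℂ) • ((m : ℂ) • EM i j - trace (EM i j) • 1) := by
  rw [map_sum]
  simp only [brMap_tmul_sub_tmul, ← Finset.smul_sum, Finset.sum_sub_distrib,
    sum_single_mul_single_eq_card_smul, sum_single_mul_single_eq_trace_smul_one, Fintype.card_fin]

section

variable {n : ℕ} {δ : glC (n + 1) →ₗ[ℂ] glC (n + 1) ⊗[ℂ] glC (n + 1)}

theorem brMap_comp_single
    (hδ : ∀ i j : Fin (n + 1),
      δ (EM i j) = (1 / (2 * (n : ℂ) + 2)) •
        ∑ k : Fin (n + 1), (EM i k ⊗ₜ[ℂ] EM k j - EM k j ⊗ₜ[ℂ] EM i k))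
    (i j : Fin (n + 1)) :
    (brMap (n + 1) ∘ₗ δ) (EM i j) = EM i j - ((n : ℂ) + 1)⁻¹ • trace (EM i j) • 1 := by
  have hn : (n : ℂ) + 1 ≠ 0 := Nat.cast_add_one_ne_zero n
  rw [LinearMap.comp_apply, hδ, map_smul, brMap_sum_tmul_single]
  push_cast
  match_scalars <;> field_simp

theorem brMap_comp_eq_id_sub_trace
    (hδ : ∀ i j : Fin (n + 1),
      δ (EM i j) = (1 / (2 * (n : ℂ) + 2)) •
        ∑ k : Fin (n + 1), (EM i k ⊗ₜ[ℂ] EM k j - EM k j ⊗ₜ[ℂ] EM i k)) :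
    brMap (n + 1) ∘ₗ δ =
      LinearMap.id - ((n : ℂ) + 1)⁻¹ • (traceLinearMap (Fin (n + 1)) ℂ ℂ).smulRight 1 :=
  ext_linearMap ℂ fun i j => LinearMap.ext_ring <| by simpa using brMap_comp_single hδ i j

end

/-- the composition of the bracket (as a linear map
`sl ⊗ sl → sl`) with `δ` is the identity on `sl_{n+1}(ℂ)`. -/
theorem statement2 (n : ℕ)
    (δ : glC (n + 1) →ₗ[ℂ] glC (n + 1) ⊗[ℂ] glC (n + 1))
    (hδ : ∀ i j : Fin (n + 1),
      δ (EM i j) = (1 / (2 * (n : ℂ) + 2)) •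
        ∑ k : Fin (n + 1), (EM i k ⊗ₜ[ℂ] EM k j - EM k j ⊗ₜ[ℂ] EM i k)) :
    ∀ x ∈ sl (Fin (n + 1)) ℂ, brMap (n + 1) (δ x) = x := by
  intro x hx
  simpa [show trace x = 0 from hx] using LinearMap.congr_fun (brMap_comp_eq_id_sub_trace hδ) x
end

section
/- If (L, [·,·], δ) is a finite-dimensional co-split Lie algebra, then the dual triple (L*, δ*, [·,·]*) is also a co-split Lie algebra, where δ*(f ⊗ g)(x) = (f ⊗ g)(δ(x)) defines the bracket on L* and [·,·]*(f)(x ⊗ y) = f([x,y]) defines the cobracket on L*. -/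
open TensorProduct Module

variable (K : Type*) [Field K]
variable (L : Type*) [LieRing L] [LieAlgebra K L] [FiniteDimensional K L]

/-- The bracket of `L` as a bilinear map. -/
noncomputable abbrev brBilin : L →ₗ[K] L →ₗ[K] L :=
  LinearMap.mk₂ K (fun x y => ⁅x, y⁆) add_lie smul_lie lie_add lie_smul

/-- The flip map `τ` on `M ⊗ M`. -/
noncomputable abbrev tauM (M : Type*) [AddCommGroup M] [Module K M] :
    M ⊗[K] M →ₗ[K] M ⊗[K] M :=
  (TensorProduct.comm K M M).toLinearMap

/-- The cyclic permutation `ξ : u ⊗ v ⊗ w ↦ v ⊗ w ⊗ u` (right-associated tensors). -/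
noncomputable abbrev xiM (M : Type*) [AddCommGroup M] [Module K M] :
    M ⊗[K] (M ⊗[K] M) →ₗ[K] M ⊗[K] (M ⊗[K] M) :=
  ((TensorProduct.leftComm K M M M).trans
    (TensorProduct.congr (LinearEquiv.refl K M) (TensorProduct.comm K M M))).toLinearMap

/-- The bracket on the dual: `δ* : L* ⊗ L* → L*`, `δ*(f ⊗ g)(x) = (f ⊗ g)(δ(x))`. -/
noncomputable abbrev brDual (δ : L →ₗ[K] L ⊗[K] L) :
    Dual K L ⊗[K] Dual K L →ₗ[K] Dual K L :=
  δ.dualMap ∘ₗ TensorProduct.dualDistrib K L L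

/-- The cobracket on the dual: `[·,·]* : L* → L* ⊗ L*`, `[·,·]*(f)(x ⊗ y) = f([x,y])`,
via the canonical identification `L* ⊗ L* ≅ (L ⊗ L)*`. -/
noncomputable abbrev coDual : Dual K L →ₗ[K] Dual K L ⊗[K] Dual K L :=
  (TensorProduct.dualDistribEquiv K L L).symm.toLinearMap ∘ₗ
    (TensorProduct.lift (brBilin K L)).dualMap


section Aux

set_option linter.unusedSectionVars false

variable (K : Type*) [Field K]
variable (L : Type*) [LieRing L] [LieAlgebra K L] [FiniteDimensional K L]

@[simp] lemma xiM_tmul (M : Type*) [AddCommGroup M] [Module K M] (a b c : M) :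
    xiM K M (a ⊗ₜ (b ⊗ₜ c)) = b ⊗ₜ (c ⊗ₜ a) := by
  simp [TensorProduct.leftComm]

lemma tauM_tmul (M : Type*) [AddCommGroup M] [Module K M] (a b : M) :
    tauM K M (a ⊗ₜ b) = b ⊗ₜ a := rfl

lemma dd_symm (q : Dual K (L ⊗[K] L)) :
    TensorProduct.dualDistrib K L L ((TensorProduct.dualDistribEquiv K L L).symm q) = q :=
  (TensorProduct.dualDistribEquiv K L L).apply_symm_apply q

/-- The canonical pairing `L* ⊗ (L* ⊗ L*) → (L ⊗ (L ⊗ L))*`. -/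
noncomputable abbrev E3 : Dual K L ⊗[K] (Dual K L ⊗[K] Dual K L) →ₗ[K]
    Dual K (L ⊗[K] (L ⊗[K] L)) :=
  TensorProduct.dualDistrib K L (L ⊗[K] L) ∘ₗ
    LinearMap.lTensor (Dual K L) (TensorProduct.dualDistrib K L L)

@[simp] lemma E3_tmul (f g h : Dual K L) (u v w : L) :
    E3 K L (f ⊗ₜ (g ⊗ₜ h)) (u ⊗ₜ (v ⊗ₜ w)) = f u * (g v * h w) := by
  simp [TensorProduct.dualDistrib_apply]

lemma dd_coDual (φ : Dual K L) :
    TensorProduct.dualDistrib K L L (coDual K L φ) =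
      (TensorProduct.lift (brBilin K L)).dualMap φ :=
  (TensorProduct.dualDistribEquiv K L L).apply_symm_apply _

lemma dd_tau :
    TensorProduct.dualDistrib K L L ∘ₗ tauM K (Dual K L) =
      (tauM K L).dualMap ∘ₗ TensorProduct.dualDistrib K L L := by
  ext f g u v
  simp [TensorProduct.dualDistrib_apply, mul_comm]

lemma dd_swap (f g : Dual K L) (t : L ⊗[K] L) :
    TensorProduct.dualDistrib K L L (g ⊗ₜ f) t =
      TensorProduct.dualDistrib K L L (f ⊗ₜ g) (tauM K L t) := by
  induction t using TensorProduct.induction_on with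
  | zero => simp
  | add a b ha hb => rw [map_add, map_add, map_add, ha, hb]
  | tmul u v => simp [TensorProduct.dualDistrib_apply, tauM_tmul, mul_comm]

lemma dd_xi1 :
    E3 K L ∘ₗ xiM K (Dual K L) =
      (xiM K L ∘ₗ xiM K L).dualMap ∘ₗ E3 K L := by
  ext f g h u v w
  simp [mul_comm, mul_left_comm]

lemma dd_xi2 :
    E3 K L ∘ₗ (xiM K (Dual K L) ∘ₗ xiM K (Dual K L)) =
      (xiM K L).dualMap ∘ₗ E3 K L := by
  ext f g h u v w
  simp [mul_comm, mul_left_comm]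

lemma brDual_tmul (δ : L →ₗ[K] L ⊗[K] L) (f g : Dual K L) (x : L) :
    brDual K L δ (f ⊗ₜ g) x = TensorProduct.dualDistrib K L L (f ⊗ₜ g) (δ x) := rfl

lemma key2 (δ : L →ₗ[K] L ⊗[K] L) (f g h : Dual K L) (t : L ⊗[K] L) :
    TensorProduct.dualDistrib K L L (f ⊗ₜ brDual K L δ (g ⊗ₜ h)) t =
      E3 K L (f ⊗ₜ (g ⊗ₜ h)) (LinearMap.lTensor L δ t) := by
  induction t using TensorProduct.induction_on with
  | zero => simp
  | add a b ha hb =>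
      rw [map_add (TensorProduct.dualDistrib K L L (f ⊗ₜ brDual K L δ (g ⊗ₜ h))),
        map_add (LinearMap.lTensor L δ), map_add (E3 K L (f ⊗ₜ (g ⊗ₜ h))), ha, hb]
  | tmul u v =>
      have h1 : TensorProduct.dualDistrib K L L (f ⊗ₜ brDual K L δ (g ⊗ₜ h)) (u ⊗ₜ v) =
          f u * brDual K L δ (g ⊗ₜ h) v := TensorProduct.dualDistrib_apply _ _ _ _
      have h2 : E3 K L (f ⊗ₜ (g ⊗ₜ h)) (LinearMap.lTensor L δ (u ⊗ₜ v)) =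
          f u * TensorProduct.dualDistrib K L L (g ⊗ₜ h) (δ v) := by
        rw [LinearMap.lTensor_tmul]
        exact TensorProduct.dualDistrib_apply _ _ _ _
      rw [h1, h2, brDual_tmul]

lemma key2' (δ : L →ₗ[K] L ⊗[K] L) (f g h : Dual K L) (x : L) :
    brDual K L δ (f ⊗ₜ brDual K L δ (g ⊗ₜ h)) x =
      E3 K L (f ⊗ₜ (g ⊗ₜ h)) (LinearMap.lTensor L δ (δ x)) :=
  key2 K L δ f g h (δ x)

lemma cyc1 (f g h : Dual K L) (T : L ⊗[K] (L ⊗[K] L)) :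
    E3 K L (g ⊗ₜ (h ⊗ₜ f)) T = E3 K L (f ⊗ₜ (g ⊗ₜ h)) (xiM K L (xiM K L T)) := by
  have h1 := LinearMap.congr_fun (dd_xi1 K L) (f ⊗ₜ (g ⊗ₜ h))
  simp only [LinearMap.coe_comp, Function.comp_apply, xiM_tmul] at h1
  exact LinearMap.congr_fun h1 T

lemma cyc2 (f g h : Dual K L) (T : L ⊗[K] (L ⊗[K] L)) :
    E3 K L (h ⊗ₜ (f ⊗ₜ g)) T = E3 K L (f ⊗ₜ (g ⊗ₜ h)) (xiM K L T) := by
  have h1 := LinearMap.congr_fun (dd_xi2 K L) (f ⊗ₜ (g ⊗ₜ h))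
  simp only [LinearMap.coe_comp, Function.comp_apply, xiM_tmul] at h1
  exact LinearMap.congr_fun h1 T

lemma key4 (s : Dual K L ⊗[K] Dual K L) (u v w : L) :
    E3 K L (LinearMap.lTensor (Dual K L) (coDual K L) s) (u ⊗ₜ (v ⊗ₜ w)) =
      TensorProduct.dualDistrib K L L s (u ⊗ₜ ⁅v, w⁆) := by
  induction s using TensorProduct.induction_on with
  | zero => simp
  | add a b ha hb =>
      rw [map_add (LinearMap.lTensor (Dual K L) (coDual K L)), map_add (E3 K L),
        LinearMap.add_apply, map_add (TensorProduct.dualDistrib K L L),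
        LinearMap.add_apply, ha, hb]
  | tmul f g =>
      rw [LinearMap.lTensor_tmul]
      have h1 : E3 K L (f ⊗ₜ coDual K L g) (u ⊗ₜ (v ⊗ₜ w)) =
          f u * TensorProduct.dualDistrib K L L (coDual K L g) (v ⊗ₜ w) := by
        rw [show E3 K L (f ⊗ₜ coDual K L g) = TensorProduct.dualDistrib K L (L ⊗[K] L)
            (f ⊗ₜ TensorProduct.dualDistrib K L L (coDual K L g)) from by
          rw [show E3 K L (f ⊗ₜ coDual K L g) = TensorProduct.dualDistrib K L (L ⊗[K] L)
              (LinearMap.lTensor (Dual K L) (TensorProduct.dualDistrib K L L)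
                (f ⊗ₜ coDual K L g)) from rfl, LinearMap.lTensor_tmul]]
        exact TensorProduct.dualDistrib_apply _ _ _ _
      rw [h1, dd_coDual, TensorProduct.dualDistrib_apply, LinearMap.dualMap_apply,
        TensorProduct.lift.tmul, LinearMap.mk₂_apply]

lemma dd_tau' (s : Dual K L ⊗[K] Dual K L) :
    TensorProduct.dualDistrib K L L (tauM K (Dual K L) s) =
      (tauM K L).dualMap (TensorProduct.dualDistrib K L L s) := by
  have h := LinearMap.congr_fun (dd_tau K L) s
  simp only [LinearMap.coe_comp, Function.comp_apply] at h
  exact h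

lemma dd_xi1' (s : Dual K L ⊗[K] (Dual K L ⊗[K] Dual K L)) :
    E3 K L (xiM K (Dual K L) s) =
      (xiM K L ∘ₗ xiM K L).dualMap (E3 K L s) := by
  have h := LinearMap.congr_fun (dd_xi1 K L) s
  simp only [LinearMap.coe_comp, Function.comp_apply] at h
  exact h

lemma dd_xi2' (s : Dual K L ⊗[K] (Dual K L ⊗[K] Dual K L)) :
    E3 K L (xiM K (Dual K L) (xiM K (Dual K L) s)) =
      (xiM K L).dualMap (E3 K L s) := by
  have h := LinearMap.congr_fun (dd_xi2 K L) s
  simp only [LinearMap.coe_comp, Function.comp_apply] at h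
  exact h

lemma brDual_apply (δ : L →ₗ[K] L ⊗[K] L) (s : Dual K L ⊗[K] Dual K L) (x : L) :
    brDual K L δ s x = TensorProduct.dualDistrib K L L s (δ x) := rfl

end Aux

set_option maxHeartbeats 1000000
set_option synthInstance.maxHeartbeats 100000

/-- if `(L, [·,·], δ)` is a finite dimensional co-split Lie algebra,
then the dual triple `(L*, δ*, [·,·]*)` is again a co-split Lie algebra:
`δ*` is an antisymmetric bracket satisfying the Jacobi identity, `[·,·]*` is a
Lie coalgebra structure, and their composition is the identity on `L*`. -/
theorem statement8
    (δ : L →ₗ[K] L ⊗[K] L)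
    (hanti : ∀ x : L, tauM K L (δ x) + δ x = 0)
    (hcojac : ∀ x : L,
      ((LinearMap.id + xiM K L + xiM K L ∘ₗ xiM K L :
          L ⊗[K] (L ⊗[K] L) →ₗ[K] L ⊗[K] (L ⊗[K] L)))
        ((LinearMap.lTensor L δ) (δ x)) = 0)
    (hcompat : ∀ x : L, TensorProduct.lift (brBilin K L) (δ x) = x) :
    -- the dual bracket is antisymmetric
    (∀ p : Dual K L ⊗[K] Dual K L,
      brDual K L δ (tauM K (Dual K L) p) + brDual K L δ p = 0) ∧
    -- the dual bracket satisfies the Jacobi identity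
    (∀ t : Dual K L ⊗[K] (Dual K L ⊗[K] Dual K L),
      brDual K L δ ((LinearMap.lTensor (Dual K L) (brDual K L δ))
        (((LinearMap.id + xiM K (Dual K L) + xiM K (Dual K L) ∘ₗ xiM K (Dual K L) :
            Dual K L ⊗[K] (Dual K L ⊗[K] Dual K L) →ₗ[K]
              Dual K L ⊗[K] (Dual K L ⊗[K] Dual K L))) t)) = 0) ∧
    -- the dual cobracket is antisymmetric
    (∀ φ : Dual K L, tauM K (Dual K L) (coDual K L φ) + coDual K L φ = 0) ∧
    -- the dual cobracket satisfies the co-Jacobi identity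
    (∀ φ : Dual K L,
      ((LinearMap.id + xiM K (Dual K L) + xiM K (Dual K L) ∘ₗ xiM K (Dual K L) :
          Dual K L ⊗[K] (Dual K L ⊗[K] Dual K L) →ₗ[K]
            Dual K L ⊗[K] (Dual K L ⊗[K] Dual K L)))
        ((LinearMap.lTensor (Dual K L) (coDual K L)) (coDual K L φ)) = 0) ∧
    -- co-split compatibility on the dual
    (∀ φ : Dual K L, brDual K L δ (coDual K L φ) = φ) := by
  refine ⟨?_, ?_, ?_, ?_, ?_⟩
  · -- antisymmetry of the dual bracket
    intro p
    induction p using TensorProduct.induction_on with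
    | zero => simp only [map_zero, add_zero]
    | add a b ha hb =>
        rw [map_add, map_add, map_add]
        rw [show ∀ (x y z w : Dual K L), x + y + (z + w) = (x + z) + (y + w) from
          fun x y z w => by abel]
        rw [ha, hb, add_zero]
    | tmul f g =>
        ext x
        simp only [LinearMap.add_apply, LinearMap.zero_apply]
        rw [tauM_tmul]
        rw [show brDual K L δ (g ⊗ₜ f) x =
            TensorProduct.dualDistrib K L L (f ⊗ₜ g) (tauM K L (δ x)) from
          dd_swap K L f g (δ x)]
        rw [brDual_tmul, ← map_add, hanti, map_zero]
  · -- Jacobi identity for the dual bracket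
    intro t
    induction t using TensorProduct.induction_on with
    | zero => simp
    | add a b ha hb => rw [map_add, map_add, map_add, ha, hb, add_zero]
    | tmul f q =>
        induction q using TensorProduct.induction_on with
        | zero => simp
        | add a b ha hb =>
            rw [tmul_add, map_add, map_add, map_add, ha, hb, add_zero]
        | tmul g h =>
            ext x
            have harg : (LinearMap.id + xiM K (Dual K L) +
                xiM K (Dual K L) ∘ₗ xiM K (Dual K L) :
                  Dual K L ⊗[K] (Dual K L ⊗[K] Dual K L) →ₗ[K]
                    Dual K L ⊗[K] (Dual K L ⊗[K] Dual K L)) (f ⊗ₜ[K] (g ⊗ₜ[K] h)) =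
                f ⊗ₜ[K] (g ⊗ₜ[K] h) + g ⊗ₜ[K] (h ⊗ₜ[K] f) + h ⊗ₜ[K] (f ⊗ₜ[K] g) := by
              simp
            rw [harg, map_add (LinearMap.lTensor (Dual K L) (brDual K L δ)),
              map_add (LinearMap.lTensor (Dual K L) (brDual K L δ)),
              LinearMap.lTensor_tmul, LinearMap.lTensor_tmul, LinearMap.lTensor_tmul,
              map_add (brDual K L δ), map_add (brDual K L δ),
              LinearMap.add_apply, LinearMap.add_apply,
              key2', key2', key2', cyc1 K L f g h, cyc2 K L f g h, LinearMap.zero_apply,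
              ← map_add, ← map_add]
            have h0 : LinearMap.lTensor L δ (δ x) +
                xiM K L (xiM K L (LinearMap.lTensor L δ (δ x))) +
                xiM K L (LinearMap.lTensor L δ (δ x)) = 0 := by
              have hx := hcojac x
              simp only [LinearMap.add_apply, LinearMap.id_apply, LinearMap.coe_comp,
                Function.comp_apply] at hx
              rw [← hx]; abel
            rw [h0, map_zero]
  · -- antisymmetry of the dual cobracket
    intro φ
    rw [← LinearEquiv.map_eq_zero_iff (TensorProduct.dualDistribEquiv K L L), map_add]
    have hcoe : ∀ s : Dual K L ⊗[K] Dual K L,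
        TensorProduct.dualDistribEquiv K L L s = TensorProduct.dualDistrib K L L s :=
      fun _ => rfl
    rw [hcoe, hcoe]
    rw [dd_tau' K L, dd_coDual]
    apply TensorProduct.ext'
    intro u v
    simp only [LinearMap.add_apply, LinearMap.dualMap_apply, LinearMap.zero_apply]
    rw [tauM_tmul, TensorProduct.lift.tmul, TensorProduct.lift.tmul,
      LinearMap.mk₂_apply, LinearMap.mk₂_apply, ← map_add]
    rw [show ⁅v, u⁆ + ⁅u, v⁆ = 0 from by rw [← lie_skew u v]; abel]
    exact map_zero φ
  · -- co-Jacobi identity for the dual cobracket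
    intro φ
    have hinj : Function.Injective (E3 K L) := by
      have hco : ⇑((TensorProduct.congr (LinearEquiv.refl K (Dual K L))
          (TensorProduct.dualDistribEquiv K L L)).trans
            (TensorProduct.dualDistribEquiv K L (L ⊗[K] L))) = ⇑(E3 K L) := by
        funext s
        induction s using TensorProduct.induction_on with
        | zero => simp
        | add a b ha hb => rw [map_add, map_add, ha, hb]
        | tmul f q => rfl
      rw [← hco,]
      exact LinearEquiv.injective _
    apply hinj
    rw [map_zero]
    set S := (LinearMap.lTensor (Dual K L) (coDual K L)) (coDual K L φ) with hS
    simp only [LinearMap.add_apply, LinearMap.id_apply]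
    rw [map_add, map_add]
    rw [show (xiM K (Dual K L) ∘ₗ xiM K (Dual K L)) S =
        xiM K (Dual K L) (xiM K (Dual K L) S) from rfl]
    rw [dd_xi1' K L S, dd_xi2' K L S]
    have hSval : ∀ u v w : L, E3 K L S (u ⊗ₜ (v ⊗ₜ w)) = φ ⁅u, ⁅v, w⁆⁆ := by
      intro u v w
      rw [hS, key4, dd_coDual, LinearMap.dualMap_apply, TensorProduct.lift.tmul,
        LinearMap.mk₂_apply]
    apply TensorProduct.ext'
    intro u q
    induction q using TensorProduct.induction_on with
    | zero => simp
    | add a b ha hb => rw [tmul_add, map_add, ha, hb]; simp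
    | tmul v w =>
        rw [LinearMap.add_apply, LinearMap.add_apply, LinearMap.dualMap_apply,
          LinearMap.dualMap_apply, LinearMap.zero_apply]
        rw [show (xiM K L ∘ₗ xiM K L) (u ⊗ₜ[K] (v ⊗ₜ[K] w)) = w ⊗ₜ[K] (u ⊗ₜ[K] v) from by
          simp]
        rw [show xiM K L (u ⊗ₜ[K] (v ⊗ₜ[K] w)) = v ⊗ₜ[K] (w ⊗ₜ[K] u) from by simp]
        rw [hSval, hSval, hSval, ← map_add, ← map_add]
        rw [show ⁅u, ⁅v, w⁆⁆ + ⁅w, ⁅u, v⁆⁆ + ⁅v, ⁅w, u⁆⁆ = 0 from by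
          have hj := lie_jacobi u v w
          rw [← hj]; abel]
        simp
  · -- compatibility
    intro φ
    ext x
    rw [brDual_apply, dd_coDual, LinearMap.dualMap_apply, hcompat]
end

section
/- The co-split cobracket δ of sl_n(ℂ) is injective and is a homomorphism of sl_n(ℂ)-modules, where sl_n acts on itself by the adjoint action and on sl_n ⊗ sl_n by the tensor product of adjoint actions, i.e. δ(ad(x)(y)) = (ad(x) ⊗ 1 + 1 ⊗ ad(x))(δ(y)) for all x, y ∈ sl_n(ℂ). -/
open Matrix TensorProduct LieAlgebra.SpecialLinear

attribute [local instance 100] LieRing.ofAssociativeRing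

lemma EM_mul_EM {m : ℕ} (i j p q : Fin m) :
    EM i j * EM p q = if j = p then EM i q else 0 := by
  rcases eq_or_ne j p with rfl | h
  · simp [Matrix.single_mul_single_same]
  · simp [Matrix.single_mul_single_of_ne, h]

lemma sum_EM_diag (m : ℕ) : ∑ k : Fin m, EM k k = (1 : glC m) := by
  ext a b
  simp [Matrix.one_apply, Matrix.single, Matrix.sum_apply, ite_and,
    Finset.sum_ite_eq, Finset.sum_ite_eq']

lemma trace_EM {m : ℕ} (i j : Fin m) :
    Matrix.trace (EM i j) = if i = j then (1:ℂ) else 0 := by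
  simp [Matrix.trace, Matrix.diag, Matrix.single, ite_and,
    Finset.sum_ite_eq, Finset.sum_ite_eq', eq_comm]

lemma sum_ite_const {ι α : Type*} [Fintype ι] [AddCommMonoid α]
    (c : Prop) [Decidable c] (f : ι → α) :
    ∑ i : ι, (if c then f i else 0) = if c then ∑ i : ι, f i else 0 := by
  split_ifs <;> simp

section main
variable (n : ℕ) (δ : glC n →ₗ[ℂ] glC n ⊗[ℂ] glC n)
  (hδ : ∀ i j : Fin n,
      δ (EM i j) = (1 / (2 * (n : ℂ))) •
        ∑ k : Fin n, (EM i k ⊗ₜ[ℂ] EM k j - EM k j ⊗ₜ[ℂ] EM i k))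

noncomputable def rr : glC n ⊗[ℂ] glC n := ∑ p : Fin n, ∑ k : Fin n, EM p k ⊗ₜ[ℂ] EM k p

include hδ in
lemma key1 (M : glC n) :
    δ M = (1 / (2 * (n : ℂ))) •
      (LinearMap.rTensor (glC n) (LieAlgebra.ad ℂ (glC n) M)) (rr n) := by
  induction M using Matrix.induction_on' with
  | h_zero => simp
  | h_add p q hp hq => simp [map_add, LinearMap.rTensor_add, LinearMap.add_apply, smul_add, hp, hq]
  | h_std_basis i j x =>
    have base : δ (EM i j) = (1 / (2 * (n : ℂ))) •
        (LinearMap.rTensor (glC n) (LieAlgebra.ad ℂ (glC n) (EM i j))) (rr n) := by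
      rw [hδ]
      congr 1
      rw [rr, map_sum]
      simp only [map_sum, LinearMap.rTensor_tmul, LieAlgebra.ad_apply, Ring.lie_def,
        EM_mul_EM, sub_tmul, ite_tmul, zero_tmul, Finset.sum_sub_distrib, sum_ite_const,
        Finset.sum_ite_eq, Finset.sum_ite_eq', Finset.mem_univ, if_true]
    have hx : Matrix.single i j x = x • EM i j := by
      simp [Matrix.smul_single, smul_eq_mul]
    rw [hx, LinearMap.map_smul, base, map_smul, LinearMap.rTensor_smul,
      LinearMap.smul_apply]
    module

include hδ in
lemma key2_s15 (M : glC n) :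
    δ M = -((1 / (2 * (n : ℂ))) •
      (LinearMap.lTensor (glC n) (LieAlgebra.ad ℂ (glC n) M)) (rr n)) := by
  induction M using Matrix.induction_on' with
  | h_zero => simp
  | h_add p q hp hq =>
    rw [LinearMap.map_add, hp, hq, map_add, LinearMap.lTensor_add,
      LinearMap.add_apply, smul_add, neg_add]
  | h_std_basis i j x =>
    have base : δ (EM i j) = -((1 / (2 * (n : ℂ))) •
        (LinearMap.lTensor (glC n) (LieAlgebra.ad ℂ (glC n) (EM i j))) (rr n)) := by
      have hL : (LinearMap.lTensor (glC n) (LieAlgebra.ad ℂ (glC n) (EM i j))) (rr n)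
          = -∑ k : Fin n, (EM i k ⊗ₜ[ℂ] EM k j - EM k j ⊗ₜ[ℂ] EM i k) := by
        rw [rr, map_sum]
        simp only [map_sum, LinearMap.lTensor_tmul, LieAlgebra.ad_apply, Ring.lie_def,
          EM_mul_EM, tmul_sub, tmul_ite, tmul_zero, Finset.sum_sub_distrib, sum_ite_const,
          Finset.sum_ite_eq, Finset.sum_ite_eq', Finset.mem_univ, if_true, neg_sub]
      rw [hδ, hL, smul_neg, neg_neg]
    have hx : Matrix.single i j x = x • EM i j := by
      simp [Matrix.smul_single, smul_eq_mul]
    rw [hx, LinearMap.map_smul, base, map_smul, LinearMap.lTensor_smul,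
      LinearMap.smul_apply]
    module

include hδ in
lemma equivar (x y : glC n) :
    δ ⁅x, y⁆ =
      (LinearMap.rTensor (glC n) (LieAlgebra.ad ℂ (glC n) x) +
        LinearMap.lTensor (glC n) (LieAlgebra.ad ℂ (glC n) x)) (δ y) := by
  have had : LieAlgebra.ad ℂ (glC n) ⁅x, y⁆ =
      (LieAlgebra.ad ℂ (glC n) x) ∘ₗ (LieAlgebra.ad ℂ (glC n) y)
        - (LieAlgebra.ad ℂ (glC n) y) ∘ₗ (LieAlgebra.ad ℂ (glC n) x) := by
    rw [LieHom.map_lie]; rfl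
  have hcomm : (LinearMap.rTensor (glC n) (LieAlgebra.ad ℂ (glC n) y))
      ((LinearMap.lTensor (glC n) (LieAlgebra.ad ℂ (glC n) x)) (rr n))
      = (LinearMap.lTensor (glC n) (LieAlgebra.ad ℂ (glC n) x))
        ((LinearMap.rTensor (glC n) (LieAlgebra.ad ℂ (glC n) y)) (rr n)) := by
    rw [← LinearMap.comp_apply, ← LinearMap.comp_apply,
      LinearMap.rTensor_comp_lTensor, LinearMap.lTensor_comp_rTensor]
  have h1 : δ ⁅x, y⁆ =
      (LinearMap.rTensor (glC n) (LieAlgebra.ad ℂ (glC n) x)) (δ y)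
        - (LinearMap.rTensor (glC n) (LieAlgebra.ad ℂ (glC n) y)) (δ x) := by
    rw [key1 n δ hδ ⁅x, y⁆, had, LinearMap.rTensor_sub, LinearMap.rTensor_comp,
      LinearMap.rTensor_comp, LinearMap.sub_apply, LinearMap.comp_apply,
      LinearMap.comp_apply, smul_sub, key1 n δ hδ x, key1 n δ hδ y,
      LinearMap.map_smul, LinearMap.map_smul]
  have h2 : (LinearMap.rTensor (glC n) (LieAlgebra.ad ℂ (glC n) y)) (δ x)
      = -(LinearMap.lTensor (glC n) (LieAlgebra.ad ℂ (glC n) x)) (δ y) := by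
    rw [key2_s15 n δ hδ x, map_neg, LinearMap.map_smul, hcomm, ← LinearMap.map_smul,
      ← key1 n δ hδ y]
  rw [h1, h2, LinearMap.add_apply]
  abel

include hδ in
lemma mu_delta (A : glC n) :
    LinearMap.mul' ℂ (glC n) (δ A) =
      (1 / (2 * (n : ℂ))) • ((n : ℂ) • A - (Matrix.trace A) • (1 : glC n)) := by
  induction A using Matrix.induction_on' with
  | h_zero => simp
  | h_add p q hp hq =>
    rw [LinearMap.map_add, LinearMap.map_add, hp, hq, Matrix.trace_add]
    module
  | h_std_basis i j x =>
    have base : LinearMap.mul' ℂ (glC n) (δ (EM i j)) =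
        (1 / (2 * (n : ℂ))) • ((n : ℂ) • EM i j - (Matrix.trace (EM i j)) • (1 : glC n)) := by
      rw [hδ, LinearMap.map_smul, map_sum]
      congr 1
      simp only [map_sub, LinearMap.mul'_apply, EM_mul_EM, if_pos rfl,
        Finset.sum_sub_distrib, Finset.sum_const, Finset.card_univ, Fintype.card_fin,
        sum_ite_const, sum_EM_diag, trace_EM, Nat.cast_smul_eq_nsmul]
      rcases eq_or_ne i j with rfl | h
      · simp
      · simp [h, Ne.symm h]
    have hx : Matrix.single i j x = x • EM i j := by
      simp [Matrix.smul_single, smul_eq_mul]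
    rw [hx, LinearMap.map_smul, LinearMap.map_smul, base, Matrix.trace_smul, smul_eq_mul]
    module
end main


/-- the co-split cobracket `δ` of `sl_n(ℂ)` is injective and is a
homomorphism of `sl_n(ℂ)`-modules: `δ(ad(x)(y)) = (ad(x) ⊗ 1 + 1 ⊗ ad(x))(δ(y))`. -/
theorem statement15 (n : ℕ)
    (δ : glC n →ₗ[ℂ] glC n ⊗[ℂ] glC n)
    (hδ : ∀ i j : Fin n,
      δ (EM i j) = (1 / (2 * (n : ℂ))) •
        ∑ k : Fin n, (EM i k ⊗ₜ[ℂ] EM k j - EM k j ⊗ₜ[ℂ] EM i k)) :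
    Set.InjOn δ (sl (Fin n) ℂ : Set (glC n)) ∧
    (∀ x ∈ sl (Fin n) ℂ, ∀ y ∈ sl (Fin n) ℂ,
      δ ⁅x, y⁆ =
        (LinearMap.rTensor (glC n) (LieAlgebra.ad ℂ (glC n) x) +
          LinearMap.lTensor (glC n) (LieAlgebra.ad ℂ (glC n) x)) (δ y)) := by

  constructor
  · rcases Nat.eq_zero_or_pos n with rfl | hn
    · intro A _ B _ _
      ext i j
      exact i.elim0
    · intro A hA B hB h
      have tA : Matrix.trace A = 0 := LinearMap.mem_ker.mp hA
      have tB : Matrix.trace B = 0 := LinearMap.mem_ker.mp hB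
      have hmu := mu_delta n δ hδ A
      rw [h, mu_delta n δ hδ B, tA, tB] at hmu
      have hn' : (n : ℂ) ≠ 0 := Nat.cast_ne_zero.mpr hn.ne'
      have hs : ∀ C : glC n, (1 / (2 * (n : ℂ))) • ((n : ℂ) • C - (0:ℂ) • 1)
          = (1/2 : ℂ) • C := by
        intro C
        rw [zero_smul, sub_zero, smul_smul]
        congr 1
        field_simp
      rw [hs, hs] at hmu
      exact (smul_right_injective (glC n) (by norm_num : (1/2 : ℂ) ≠ 0) hmu).symm
  · intro x _ y _
    exact equivar n δ hδ x y
end
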